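/- arXiv:1812.04354 — 2 statements merged into one kernel-verified Lean document; each statement's English description precedes it below -/
import Mathlib

section
/- For X ∈ L^1 and α ∈ (0,1], AV@R_α(X) = sup{ E^Q[−X] | Q a probability measure absolutely continuous with respect to P with dQ/dP ≤ 1/α }. -/
/-!
Write `q β = V@R_β(X)` and `L = -X`. The map `q` is the quantile function of `L` read from the
upper tail: `q β ≤ t ↔ P(L > t) ≤ β` by right-continuity of the distribution function, hence `q`
pushes the uniform distribution on `(0, 1)` forward to the law of `L`. For `α < 1` and
`t = q α`, `q` lies above `t` on `(0, α)` and below it on `(α, 1)`, so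
`α · AV@R_α(X) = α t + E[(L - t)⁺]`. Every admissible density satisfies `(L - t) Y ≤ (L - t)⁺ / α`,
so `E[L Y] ≤ t + E[(L - t)⁺] / α`, with equality for `Y = (1_{L > t} + c · 1_{L = t}) / α`; a
weight `c ∈ [0, 1]` making `E[Y] = 1` exists because `P(L > t) ≤ α ≤ P(L ≥ t)`. For `α = 1` the
only admissible density is `Y = 1`, and `AV@R_1(X) = E[L]`.
-/
open MeasureTheory Set
open scoped ENNReal

variable {Ω : Type*} [MeasurableSpace Ω]

/-- The (real-valued) Value-at-Risk at level `β`: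
`V@R_β(X) = inf {t ∈ ℝ | P[X + t·𝟙 < 0] ≤ β}`. -/
noncomputable def realVaR (P : Measure Ω) (β : ℝ) (X : Ω → ℝ) : ℝ :=
  sInf {t : ℝ | P {ω | X ω + t < 0} ≤ ENNReal.ofReal β}

/-- The Average-Value-at-Risk at level `α`:
`AV@R_α(X) = (1/α) ∫₀^α V@R_β(X) dβ`. -/
noncomputable def AVaR (P : Measure Ω) (α : ℝ) (X : Ω → ℝ) : ℝ :=
  (1 / α) * ∫ β in Ioo (0 : ℝ) α, realVaR P β X

open ProbabilityTheory

theorem StieltjesFunction.sInf_setOf_le_le_iff (f : StieltjesFunction ℝ) {c t : ℝ}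
    (hlow : ∃ s, f s < c) (hhigh : ∃ s, c ≤ f s) : sInf {s | c ≤ f s} ≤ t ↔ c ≤ f t := by
  obtain ⟨s₀, hs₀⟩ := hlow
  have hbdd : BddBelow {s | c ≤ f s} :=
    ⟨s₀, fun s hs => le_of_not_gt fun hlt => (le_trans hs (f.mono hlt.le)).not_gt hs₀⟩
  refine ⟨fun h => ?_, fun h => csInf_le hbdd h⟩
  have hright : ∀ u ∈ Ioi t, c ≤ f u := fun u hu => by
    obtain ⟨s, hs, hsu⟩ := exists_lt_of_csInf_lt hhigh (h.trans_lt hu)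
    exact le_trans hs (f.mono hsu.le)
  exact ge_of_tendsto ((f.right_continuous t).mono Ioi_subset_Ici_self)
    (eventually_nhdsWithin_of_forall hright)

noncomputable def tailQuantile (μ : Measure ℝ) (β : ℝ) : ℝ :=
  sInf {t : ℝ | μ (Ioi t) ≤ ENNReal.ofReal β}

section TailQuantile

variable (μ : Measure ℝ) [IsProbabilityMeasure μ] {α β t : ℝ}

theorem measure_Ioi_eq_ofReal_one_sub_cdf (t : ℝ) : μ (Ioi t) = ENNReal.ofReal (1 - cdf μ t) := by
  rw [← compl_Iic, prob_compl_eq_one_sub measurableSet_Iic, ← ofReal_cdf,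
    ENNReal.ofReal_sub _ (cdf_nonneg μ t), ENNReal.ofReal_one]

theorem measure_Ioi_le_ofReal_iff_one_sub_le_cdf (hβ : 0 ≤ β) :
    μ (Ioi t) ≤ ENNReal.ofReal β ↔ 1 - β ≤ cdf μ t := by
  rw [measure_Ioi_eq_ofReal_one_sub_cdf, ENNReal.ofReal_le_ofReal_iff hβ]
  constructor <;> intro h <;> linarith

theorem tailQuantile_le_iff (hβ0 : 0 < β) (hβ1 : β < 1) :
    tailQuantile μ β ≤ t ↔ μ (Ioi t) ≤ ENNReal.ofReal β := by
  simp_rw [tailQuantile, measure_Ioi_le_ofReal_iff_one_sub_le_cdf μ hβ0.le]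
  apply (cdf μ).sInf_setOf_le_le_iff
  · exact ((tendsto_cdf_atBot μ).eventually (gt_mem_nhds (by linarith))).exists
  · exact ((tendsto_cdf_atTop μ).eventually (lt_mem_nhds (by linarith))).exists.imp
      fun _ h => h.le

theorem lt_tailQuantile_iff (hβ0 : 0 < β) (hβ1 : β < 1) :
    t < tailQuantile μ β ↔ ENNReal.ofReal β < μ (Ioi t) := by
  rw [← not_le, tailQuantile_le_iff μ hβ0 hβ1, not_le]

theorem antitoneOn_tailQuantile : AntitoneOn (tailQuantile μ) (Ioo 0 1) := by
  intro β hβ β' hβ' hle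
  rw [tailQuantile_le_iff μ hβ'.1 hβ'.2]
  exact ((tailQuantile_le_iff μ hβ.1 hβ.2).1 le_rfl).trans (ENNReal.ofReal_le_ofReal hle)

theorem aemeasurable_tailQuantile :
    AEMeasurable (tailQuantile μ) (volume.restrict (Ioo 0 1)) :=
  aemeasurable_restrict_of_antitoneOn measurableSet_Ioo (antitoneOn_tailQuantile μ)

theorem preimage_Ioi_tailQuantile_inter_Ioo (t : ℝ) :
    tailQuantile μ ⁻¹' Ioi t ∩ Ioo 0 1 = Ioo 0 (μ.real (Ioi t)) := by
  ext β
  simp only [mem_inter_iff, mem_preimage, mem_Ioi, mem_Ioo]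
  constructor
  · rintro ⟨h, hβ0, hβ1⟩
    exact ⟨hβ0, (ENNReal.ofReal_lt_iff_lt_toReal hβ0.le (measure_ne_top μ _)).1
      ((lt_tailQuantile_iff μ hβ0 hβ1).1 h)⟩
  · rintro ⟨hβ0, hβ⟩
    have hβ1 : β < 1 := hβ.trans_le measureReal_le_one
    exact ⟨(lt_tailQuantile_iff μ hβ0 hβ1).2
      ((ENNReal.ofReal_lt_iff_lt_toReal hβ0.le (measure_ne_top μ _)).2 hβ), hβ0, hβ1⟩

theorem map_tailQuantile : (volume.restrict (Ioo 0 1)).map (tailQuantile μ) = μ := by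
  have hQ := aemeasurable_tailQuantile μ
  have : IsProbabilityMeasure (volume.restrict (Ioo (0 : ℝ) 1)) := ⟨by simp⟩
  have : IsProbabilityMeasure ((volume.restrict (Ioo (0 : ℝ) 1)).map (tailQuantile μ)) :=
    Measure.isProbabilityMeasure_map hQ
  have hIoi : ∀ t, (volume.restrict (Ioo 0 1)).map (tailQuantile μ) (Ioi t) = μ (Ioi t) := by
    intro t
    rw [Measure.map_apply_of_aemeasurable hQ measurableSet_Ioi,
      Measure.restrict_apply' measurableSet_Ioo, preimage_Ioi_tailQuantile_inter_Ioo,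
      Real.volume_Ioo, sub_zero, measureReal_def, ENNReal.ofReal_toReal (measure_ne_top μ _)]
  refine Measure.ext_of_Iic _ _ fun t => ?_
  rw [← compl_Ioi, prob_compl_eq_one_sub measurableSet_Ioi,
    prob_compl_eq_one_sub measurableSet_Ioi, hIoi]

theorem integral_comp_tailQuantile {φ : ℝ → ℝ} (hφ : Measurable φ) :
    ∫ β in Ioo 0 1, φ (tailQuantile μ β) = ∫ x, φ x ∂μ := by
  rw [← integral_map (aemeasurable_tailQuantile μ) hφ.aestronglyMeasurable, map_tailQuantile]

theorem integrableOn_comp_tailQuantile {φ : ℝ → ℝ} (hφ : Measurable φ) (h : Integrable φ μ) :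
    IntegrableOn (fun β => φ (tailQuantile μ β)) (Ioo 0 1) :=
  (integrable_map_measure hφ.aestronglyMeasurable (aemeasurable_tailQuantile μ)).1
    (by rwa [map_tailQuantile])

theorem measure_Ioi_tailQuantile_le (hα0 : 0 < α) (hα1 : α < 1) :
    μ (Ioi (tailQuantile μ α)) ≤ ENNReal.ofReal α :=
  (tailQuantile_le_iff μ hα0 hα1).1 le_rfl

theorem ofReal_le_measure_Ici_tailQuantile (hα1 : α < 1) :
    ENNReal.ofReal α ≤ μ (Ici (tailQuantile μ α)) := by
  have hQ := aemeasurable_tailQuantile μ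
  calc ENNReal.ofReal α = volume (Ioo 0 α) := by rw [Real.volume_Ioo, sub_zero]
    _ ≤ volume (tailQuantile μ ⁻¹' Ici (tailQuantile μ α) ∩ Ioo 0 1) :=
      measure_mono fun β hβ => ⟨antitoneOn_tailQuantile μ ⟨hβ.1, hβ.2.trans hα1⟩
        ⟨hβ.1.trans hβ.2, hα1⟩ hβ.2.le, hβ.1, hβ.2.trans hα1⟩
    _ = (volume.restrict (Ioo 0 1)).map (tailQuantile μ) (Ici (tailQuantile μ α)) := by
      rw [Measure.map_apply_of_aemeasurable hQ measurableSet_Ici,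
        Measure.restrict_apply' measurableSet_Ioo]
    _ = μ (Ici (tailQuantile μ α)) := by rw [map_tailQuantile]

theorem setIntegral_Ioo_tailQuantile (hμ : Integrable (fun x => x) μ) (hα0 : 0 < α)
    (hα1 : α < 1) :
    ∫ β in Ioo 0 α, tailQuantile μ β =
      α * tailQuantile μ α + ∫ x, max (x - tailQuantile μ α) 0 ∂μ := by
  set t := tailQuantile μ α
  have hαIoo : α ∈ Ioo (0 : ℝ) 1 := ⟨hα0, hα1⟩
  have hexcess : IntegrableOn (fun β => max (tailQuantile μ β - t) 0) (Ioo 0 1) :=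
    integrableOn_comp_tailQuantile μ (by fun_prop) (hμ.sub (integrable_const t)).pos_part
  calc ∫ β in Ioo 0 α, tailQuantile μ β
      = ∫ β in Ioo 0 α, (t + max (tailQuantile μ β - t) 0) := by
        refine setIntegral_congr_fun measurableSet_Ioo fun β hβ => ?_
        have : t ≤ tailQuantile μ β :=
          antitoneOn_tailQuantile μ ⟨hβ.1, hβ.2.trans hα1⟩ hαIoo hβ.2.le
        rw [max_eq_left (sub_nonneg.2 this)]
        ring
    _ = α * t + ∫ β in Ioo 0 α, max (tailQuantile μ β - t) 0 := by
        rw [integral_add (integrable_const t)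
          (hexcess.mono_set (Ioo_subset_Ioo_right hα1.le)), setIntegral_const,
          Real.volume_real_Ioo, sub_zero, max_eq_left hα0.le, smul_eq_mul]
    _ = α * t + ∫ β in Ioo 0 1, max (tailQuantile μ β - t) 0 := by
        rw [setIntegral_eq_of_subset_of_forall_sdiff_eq_zero measurableSet_Ioo
          (Ioo_subset_Ioo_right hα1.le) fun β hβ => max_eq_right (sub_nonpos.2 ?_)]
        exact antitoneOn_tailQuantile μ hαIoo hβ.1 (not_lt.1 fun h => hβ.2 ⟨hβ.1.1, h⟩)
    _ = α * t + ∫ x, max (x - t) 0 ∂μ := by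
        rw [integral_comp_tailQuantile μ (φ := fun x => max (x - t) 0) (by fun_prop)]

end TailQuantile

section Risk

variable {P : Measure Ω} {X : Ω → ℝ} {α : ℝ}

theorem realVaR_eq_tailQuantile (hX : AEMeasurable X P) (β : ℝ) :
    realVaR P β X = tailQuantile (P.map (-X)) β := by
  have hset : ∀ t, {ω | X ω + t < 0} = (-X) ⁻¹' Ioi t := fun t =>
    Set.ext fun ω => show X ω + t < 0 ↔ t < -X ω by constructor <;> intro h <;> linarith
  simp_rw [realVaR, tailQuantile, hset,
    Measure.map_apply_of_aemeasurable hX.neg measurableSet_Ioi]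

variable [IsProbabilityMeasure P]

theorem measure_realVaR_lt_le (hX : AEMeasurable X P) (hα0 : 0 < α) (hα1 : α < 1) :
    P {ω | realVaR P α X < -X ω} ≤ ENNReal.ofReal α := by
  have := Measure.isProbabilityMeasure_map hX.neg
  have h := measure_Ioi_tailQuantile_le (P.map (-X)) hα0 hα1
  rwa [Measure.map_apply_of_aemeasurable hX.neg measurableSet_Ioi,
    ← realVaR_eq_tailQuantile hX] at h

theorem ofReal_le_measure_realVaR_le (hX : AEMeasurable X P) (hα1 : α < 1) :
    ENNReal.ofReal α ≤ P {ω | realVaR P α X ≤ -X ω} := by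
  have := Measure.isProbabilityMeasure_map hX.neg
  have h := ofReal_le_measure_Ici_tailQuantile (P.map (-X)) hα1
  rwa [Measure.map_apply_of_aemeasurable hX.neg measurableSet_Ici,
    ← realVaR_eq_tailQuantile hX] at h

theorem AVaR_one (hX : Integrable X P) : AVaR P 1 X = ∫ ω, -X ω ∂P := by
  have := Measure.isProbabilityMeasure_map hX.aemeasurable.neg
  simp_rw [AVaR, realVaR_eq_tailQuantile hX.aemeasurable, div_one, one_mul]
  rw [integral_comp_tailQuantile _ (φ := fun x => x) measurable_id,
    integral_map hX.aemeasurable.neg measurable_id'.aestronglyMeasurable]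
  rfl

theorem AVaR_eq_of_lt_one (hX : Integrable X P) (hα0 : 0 < α) (hα1 : α < 1) :
    AVaR P α X = realVaR P α X + 1 / α * ∫ ω, max (-X ω - realVaR P α X) 0 ∂P := by
  have := Measure.isProbabilityMeasure_map hX.aemeasurable.neg
  have hμ : Integrable (fun x => x) (P.map (-X)) :=
    (integrable_map_measure aestronglyMeasurable_id hX.aemeasurable.neg).2 hX.neg
  simp_rw [AVaR, realVaR_eq_tailQuantile hX.aemeasurable]
  rw [setIntegral_Ioo_tailQuantile _ hμ hα0 hα1, integral_map hX.aemeasurable.neg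
    (by fun_prop : Measurable fun x => max (x - tailQuantile _ α) 0).aestronglyMeasurable]
  simp only [Pi.neg_apply]
  field_simp

end Risk

theorem exists_mem_Icc_add_mul_eq {a b r : ℝ} (hb : 0 ≤ b) (ha : a ≤ r) (hab : r ≤ a + b) :
    ∃ c ∈ Icc (0 : ℝ) 1, a + c * b = r := by
  refine ⟨(r - a) / b, ⟨div_nonneg (by linarith) hb, div_le_one_of_le₀ (by linarith) hb⟩, ?_⟩
  rw [div_mul_cancel_of_imp fun hb0 => by rw [hb0] at hab; linarith]
  ring

section Density

variable {P : Measure Ω} [IsProbabilityMeasure P] {Y Z : Ω → ℝ} {α t : ℝ}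

theorem integral_mul_density_le {κ : ℝ} (hZ : Integrable Z P) (hY : AEMeasurable Y P)
    (hY0 : ∀ᵐ ω ∂P, 0 ≤ Y ω) (hYκ : ∀ᵐ ω ∂P, Y ω ≤ κ) (hY1 : ∫ ω, Y ω ∂P = 1) (t : ℝ) :
    ∫ ω, Z ω * Y ω ∂P ≤ t + κ * ∫ ω, max (Z ω - t) 0 ∂P := by
  have hYi : Integrable Y P := .of_integral_ne_zero (by rw [hY1]; exact one_ne_zero)
  have hZY : Integrable (fun ω => (Z ω - t) * Y ω) P :=
    (hZ.sub (integrable_const t)).mul_bdd hY.aestronglyMeasurable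
      (by filter_upwards [hY0, hYκ] with ω h0 h1; rwa [Real.norm_of_nonneg h0])
  have hpointwise : ∀ᵐ ω ∂P, (Z ω - t) * Y ω ≤ κ * max (Z ω - t) 0 := by
    filter_upwards [hY0, hYκ] with ω h0 h1
    rcases le_total (Z ω - t) 0 with h | h
    · rw [max_eq_right h, mul_zero]
      exact mul_nonpos_of_nonpos_of_nonneg h h0
    · rw [max_eq_left h, mul_comm κ]
      exact mul_le_mul_of_nonneg_left h1 h
  calc ∫ ω, Z ω * Y ω ∂P = ∫ ω, ((Z ω - t) * Y ω + t * Y ω) ∂P := by congr! 2; ring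
    _ = ∫ ω, (Z ω - t) * Y ω ∂P + t := by
      rw [integral_add hZY (hYi.const_mul t), integral_const_mul, hY1, mul_one]
    _ ≤ ∫ ω, κ * max (Z ω - t) 0 ∂P + t := by
      gcongr ?_ + t
      exact integral_mono_ae hZY ((hZ.sub (integrable_const t)).pos_part.const_mul κ) hpointwise
    _ = t + κ * ∫ ω, max (Z ω - t) 0 ∂P := by rw [integral_const_mul, add_comm]

theorem ae_eq_one_of_le_one_of_integral_eq_one (hY1 : ∀ᵐ ω ∂P, Y ω ≤ 1)
    (hint : ∫ ω, Y ω ∂P = 1) : Y =ᵐ[P] 1 := by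
  have hYi : Integrable Y P := .of_integral_ne_zero (by rw [hint]; exact one_ne_zero)
  have hgap : (fun ω => 1 - Y ω) =ᵐ[P] 0 :=
    (integral_eq_zero_iff_of_nonneg_ae (hY1.mono fun ω h => sub_nonneg.2 h)
      ((integrable_const 1).sub hYi)).1 (by rw [integral_sub (integrable_const 1) hYi, hint]; simp)
  filter_upwards [hgap] with ω h
  exact (sub_eq_zero.1 h).symm

theorem exists_density_of_measurable (hZm : Measurable Z) (hZ : Integrable Z P) (hα0 : 0 < α)
    (hgt : P {ω | t < Z ω} ≤ ENNReal.ofReal α) (hge : ENNReal.ofReal α ≤ P {ω | t ≤ Z ω}) :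
    ∃ Y : Ω → ℝ, Measurable Y ∧ (∀ᵐ ω ∂P, 0 ≤ Y ω) ∧ (∀ᵐ ω ∂P, Y ω ≤ 1 / α) ∧
      ∫ ω, Y ω ∂P = 1 ∧ t + 1 / α * ∫ ω, max (Z ω - t) 0 ∂P = ∫ ω, Z ω * Y ω ∂P := by
  set A := {ω | t < Z ω}
  set B := {ω | Z ω = t}
  have hA : MeasurableSet A := measurableSet_lt measurable_const hZm
  have hB : MeasurableSet B := measurableSet_eq_fun hZm measurable_const
  have hAB : Disjoint A B := disjoint_left.2 fun ω h h' => h.ne' h'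
  have ha : P.real A ≤ α := ENNReal.toReal_le_of_le_ofReal hα0.le hgt
  have hab : α ≤ P.real A + P.real B := by
    have hAuB : {ω | t ≤ Z ω} = A ∪ B := by
      ext ω
      simp only [A, B, mem_union, mem_ofPred_eq, le_iff_lt_or_eq, eq_comm]
    rwa [hAuB, ENNReal.ofReal_le_iff_le_toReal (measure_ne_top _ _), ← measureReal_def,
      measureReal_union hAB hB] at hge
  -- the atom `{Z = t}` receives exactly the mass that `{t < Z}` lacks
  obtain ⟨c, ⟨hc0, hc1⟩, hcB⟩ := exists_mem_Icc_add_mul_eq measureReal_nonneg ha hab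
  set w : Ω → ℝ := fun ω => A.indicator 1 ω + c * B.indicator 1 ω
  have hw : ∀ ω, 0 ≤ w ω ∧ w ω ≤ 1 ∧ (Z ω - t) * w ω = max (Z ω - t) 0 := by
    intro ω
    rcases lt_trichotomy (Z ω) t with h | h | h
    · simp [w, A, B, h.not_gt, h.ne, h.le]
    · simp [w, A, B, h, hc0, hc1]
    · simp [w, A, B, h, h.ne', h.le]
  have hA1 : Integrable (A.indicator 1) P := (integrable_const (1 : ℝ)).indicator hA
  have hB1 : Integrable (B.indicator 1) P := (integrable_const (1 : ℝ)).indicator hB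
  have hwi : Integrable w P := hA1.fun_add (hB1.const_mul c)
  have hw1 : ∫ ω, w ω ∂P = α := by
    rw [integral_add hA1 (hB1.const_mul c), integral_const_mul,
      integral_indicator_one hA, integral_indicator_one hB, hcB]
  refine ⟨fun ω => w ω / α, ?_, .of_forall fun ω => div_nonneg (hw ω).1 hα0.le,
    .of_forall fun ω => div_le_div_of_nonneg_right (hw ω).2.1 hα0.le, ?_, ?_⟩
  · exact ((measurable_one.indicator hA).add
      ((measurable_one.indicator hB).const_mul c)).div_const α
  · rw [integral_div, hw1, div_self hα0.ne']
  · calc t + 1 / α * ∫ ω, max (Z ω - t) 0 ∂P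
        = ∫ ω, (max (Z ω - t) 0 / α + t * (w ω / α)) ∂P := by
          have hexcess : Integrable (fun ω => max (Z ω - t) 0) P :=
            (hZ.sub (integrable_const t)).pos_part
          rw [integral_add (hexcess.div_const α)
            ((hwi.div_const α).const_mul t), integral_div, integral_const_mul, integral_div, hw1,
            div_self hα0.ne']
          ring
      _ = ∫ ω, Z ω * (w ω / α) ∂P := integral_congr_ae (.of_forall fun ω => by
          beta_reduce
          rw [← (hw ω).2.2]
          ring)

theorem exists_density_integral_mul_eq (hZ : Integrable Z P) (hα0 : 0 < α)
    (hgt : P {ω | t < Z ω} ≤ ENNReal.ofReal α) (hge : ENNReal.ofReal α ≤ P {ω | t ≤ Z ω}) :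
    ∃ Y : Ω → ℝ, Measurable Y ∧ (∀ᵐ ω ∂P, 0 ≤ Y ω) ∧ (∀ᵐ ω ∂P, Y ω ≤ 1 / α) ∧
      ∫ ω, Y ω ∂P = 1 ∧ t + 1 / α * ∫ ω, max (Z ω - t) 0 ∂P = ∫ ω, Z ω * Y ω ∂P := by
  obtain ⟨Z', hZ'm, hZZ'⟩ := hZ.aemeasurable
  have hlt : P {ω | t < Z ω} = P {ω | t < Z' ω} := measure_congr (hZZ'.fun_comp (t < ·))
  have hle : P {ω | t ≤ Z ω} = P {ω | t ≤ Z' ω} := measure_congr (hZZ'.fun_comp (t ≤ ·))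
  have hexcess : ∫ ω, max (Z ω - t) 0 ∂P = ∫ ω, max (Z' ω - t) 0 ∂P :=
    integral_congr_ae (hZZ'.fun_comp fun z => max (z - t) 0)
  obtain ⟨Y, hY, hY0, hY1, hYint, hval⟩ := exists_density_of_measurable
    hZ'm (hZ.congr hZZ') hα0 (hlt ▸ hgt) (hle ▸ hge)
  refine ⟨Y, hY, hY0, hY1, hYint, ?_⟩
  rw [hexcess, hval]
  exact integral_congr_ae (hZZ'.symm.mono fun ω h => by simp only [h])

end Density

/-- Dual representation of the Average-Value-at-Risk:
`AV@R_α(X) = sup { E^Q[-X] | Q ≪ P, dQ/dP ≤ 1/α }`, where `Q` is described by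
its density `Y = dQ/dP`. -/
theorem avaR_dual_representation (P : Measure Ω) [IsProbabilityMeasure P]
    (α : ℝ) (hα0 : 0 < α) (hα1 : α ≤ 1) (X : Ω → ℝ) (hX : Integrable X P) :
    AVaR P α X =
      sSup {v : ℝ | ∃ Y : Ω → ℝ, Measurable Y ∧ (∀ᵐ ω ∂P, 0 ≤ Y ω) ∧
        (∀ᵐ ω ∂P, Y ω ≤ 1 / α) ∧ (∫ ω, Y ω ∂P) = 1 ∧
        v = ∫ ω, (-X ω) * Y ω ∂P} := by
  refine (IsGreatest.csSup_eq ⟨?_, ?_⟩).symm <;> rcases hα1.lt_or_eq with hα1 | rfl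
  · rw [AVaR_eq_of_lt_one hX hα0 hα1]
    exact exists_density_integral_mul_eq hX.neg hα0
      (measure_realVaR_lt_le hX.aemeasurable hα0 hα1)
      (ofReal_le_measure_realVaR_le hX.aemeasurable hα1)
  · exact ⟨1, measurable_const, by simp, by simp, by simp, by simp [AVaR_one hX]⟩
  · rintro v ⟨Y, hY, hY0, hY1, hYint, rfl⟩
    rw [AVaR_eq_of_lt_one hX hα0 hα1]
    exact integral_mul_density_le hX.neg hY.aemeasurable hY0 hY1 hYint _
  · rintro v ⟨Y, -, -, hY1, hYint, rfl⟩
    have hY : Y =ᵐ[P] 1 := ae_eq_one_of_le_one_of_integral_eq_one (by simpa using hY1) hYint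
    rw [AVaR_one hX]
    exact (integral_congr_ae (hY.mono fun ω h => by simp [h])).le
end

section
/- For integrable random variables X, Y ∈ L^1, X dominates Y in second-order stochastic dominance sense if and only if AV@R_α(X) ≤ AV@R_α(Y) for all α ∈ (0,1] (equivalently: Y ⪯_SSD X iff AV@R_α(Y) ≥ AV@R_α(X) for all α ∈ (0,1]). -/
/-!
Both sides only depend on the upper quantile functions `q_X, q_Y` on `(0, 1)`: `V@R_β(X) = -q_X(β)`,
and since `q_X` pushes Lebesgue measure on `(0, 1)` forward to the law of `X`, Fubini gives
`∫_{-∞}^t F_X = ∫_0^1 (t - q_X)⁺`. For monotone `q`, `α t - ∫_0^α q ≤ ∫_0^1 (t - q)⁺`, with equality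
when `q ≤ t` on `(0, α)` and `q ≥ t` on `(α, 1)`. Taking `t = q_X(α)` gives `∫_0^α q_X ≤ ∫_0^α q_Y`
for `α < 1`, and for `α = 1` by continuity in `α`; conversely, for given `t` take `α` where `q_Y`
crosses `t`.
-/

open MeasureTheory Set
open scoped ENNReal

variable {Ω : Type*} [MeasurableSpace Ω]

open Filter Topology ProbabilityTheory

section IntervalIntegrals

variable {q : ℝ → ℝ} {a b c t : ℝ}

lemma MonotoneOn.exists_split_Ioo (hq : MonotoneOn q (Ioo a b)) (hab : a ≤ b) (t : ℝ) :
    ∃ c ∈ Icc a b, (∀ u ∈ Ioo a c, q u ≤ t) ∧ ∀ u ∈ Ioo c b, t ≤ q u := by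
  set S := {c ∈ Icc a b | ∀ u ∈ Ioo a c, q u ≤ t}
  have haS : a ∈ S := ⟨left_mem_Icc.2 hab, fun u hu => absurd hu.2 hu.1.le.not_gt⟩
  have hbdd : BddAbove S := ⟨b, fun c hc => hc.1.2⟩
  have hle : a ≤ sSup S := le_csSup hbdd haS
  refine ⟨sSup S, ⟨hle, csSup_le ⟨a, haS⟩ fun c hc => hc.1.2⟩, fun u hu => ?_, fun u hu => ?_⟩
  · obtain ⟨c, hc, huc⟩ := exists_lt_of_lt_csSup ⟨a, haS⟩ hu.2
    exact hc.2 u ⟨hu.1, huc⟩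
  · by_contra! hqu
    have hu' : u ∈ Ioo a b := ⟨hle.trans_lt hu.1, hu.2⟩
    have huS : u ∈ S := ⟨Ioo_subset_Icc_self hu', fun v hv =>
      (hq ⟨hv.1, hv.2.trans hu.2⟩ hu' hv.2.le).trans hqu.le⟩
    exact (le_csSup hbdd huS).not_gt hu.1

lemma setIntegral_Ioo_const_sub (hq : IntegrableOn q (Ioo a c)) (hac : a ≤ c) :
    ∫ u in Ioo a c, (t - q u) = (c - a) * t - ∫ u in Ioo a c, q u := by
  have hconst : IntegrableOn (fun _ => t) (Ioo a c) := integrableOn_const (by simp)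
  rw [integral_sub hconst hq, setIntegral_const,
    Real.volume_real_Ioo_of_le hac, smul_eq_mul]

lemma sub_integral_le_integral_max_sub (hq : IntegrableOn q (Ioo a b)) (hc : c ∈ Icc a b) :
    (c - a) * t - ∫ u in Ioo a c, q u ≤ ∫ u in Ioo a b, max (t - q u) 0 := by
  have hsub : Ioo a c ⊆ Ioo a b := Ioo_subset_Ioo_right hc.2
  have hqc := hq.mono_set hsub
  have hconst : IntegrableOn (fun _ => t) (Ioo a c) := integrableOn_const (by simp)
  have hmax : IntegrableOn (fun u => max (t - q u) 0) (Ioo a b) :=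
    ((integrableOn_const (by simp)).sub hq).pos_part
  calc (c - a) * t - ∫ u in Ioo a c, q u = ∫ u in Ioo a c, (t - q u) :=
        (setIntegral_Ioo_const_sub hqc hc.1).symm
    _ ≤ ∫ u in Ioo a c, max (t - q u) 0 :=
        integral_mono (hconst.sub hqc) (hmax.mono_set hsub) fun u => le_max_left _ _
    _ ≤ ∫ u in Ioo a b, max (t - q u) 0 :=
        setIntegral_mono_set hmax (Eventually.of_forall fun u => le_max_right _ _) hsub.eventuallyLE

lemma integral_max_sub_eq_of_split (hq : IntegrableOn q (Ioo a b)) (hc : c ∈ Icc a b)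
    (hlow : ∀ u ∈ Ioo a c, q u ≤ t) (hhigh : ∀ u ∈ Ioo c b, t ≤ q u) :
    ∫ u in Ioo a b, max (t - q u) 0 = (c - a) * t - ∫ u in Ioo a c, q u := by
  have hsub : Ioo a c ⊆ Ioo a b := Ioo_subset_Ioo_right hc.2
  have hae : ∀ᵐ u, u ∈ Ioo a b → max (t - q u) 0 = (Ioo a c).indicator (fun u => t - q u) u := by
    filter_upwards [Measure.ae_ne volume c] with u huc hu
    rcases huc.lt_or_gt with h | h
    · rw [indicator_of_mem (show u ∈ Ioo a c from ⟨hu.1, h⟩),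
        max_eq_left (sub_nonneg.2 (hlow u ⟨hu.1, h⟩))]
    · rw [indicator_of_notMem fun h' : u ∈ Ioo a c => h'.2.not_gt h,
        max_eq_right (sub_nonpos.2 (hhigh u ⟨h, hu.2⟩))]
  rw [setIntegral_congr_ae measurableSet_Ioo hae, setIntegral_indicator measurableSet_Ioo,
    inter_eq_right.2 hsub, setIntegral_Ioo_const_sub (hq.mono_set hsub) hc.1]

lemma setIntegral_Ioo_le_of_forall_lt {f g : ℝ → ℝ} (hab : a < b)
    (hf : IntegrableOn f (Ioo a b)) (hg : IntegrableOn g (Ioo a b))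
    (h : ∀ c ∈ Ioo a b, ∫ u in Ioo a c, f u ≤ ∫ u in Ioo a c, g u) :
    ∫ u in Ioo a b, f u ≤ ∫ u in Ioo a b, g u := by
  have hprim : ∀ φ : ℝ → ℝ, IntegrableOn φ (Ioo a b) →
      ContinuousWithinAt (fun c => ∫ u in a..c, φ u) (Ioo a b) b := fun φ hφ => by
    have hφ' : IntegrableOn φ (uIcc a b) := by
      rwa [uIcc_of_le hab.le, integrableOn_Icc_iff_integrableOn_Ioo]
    have hcont := intervalIntegral.continuousOn_primitive_interval hφ'
    rw [uIcc_of_le hab.le] at hcont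
    exact (hcont b (right_mem_Icc.2 hab.le)).mono Ioo_subset_Icc_self
  have hIoo : ∀ φ : ℝ → ℝ, ∀ c, a ≤ c → ∫ u in a..c, φ u = ∫ u in Ioo a c, φ u := fun φ c hc => by
    rw [intervalIntegral.integral_of_le hc, integral_Ioc_eq_integral_Ioo]
  rw [← hIoo f b hab.le, ← hIoo g b hab.le]
  refine ContinuousWithinAt.closure_le (f := fun c => ∫ u in a..c, f u)
    (g := fun c => ∫ u in a..c, g u) ?_ (hprim f hf) (hprim g hg) fun c hc => ?_
  · rw [closure_Ioo hab.ne]; exact right_mem_Icc.2 hab.le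
  · rw [hIoo f c hc.1.le, hIoo g c hc.1.le]; exact h c hc

theorem forall_integral_max_sub_le_iff {q₁ q₂ : ℝ → ℝ} (hab : a < b)
    (hm₁ : MonotoneOn q₁ (Ioo a b)) (hm₂ : MonotoneOn q₂ (Ioo a b))
    (hi₁ : IntegrableOn q₁ (Ioo a b)) (hi₂ : IntegrableOn q₂ (Ioo a b)) :
    (∀ t, ∫ u in Ioo a b, max (t - q₂ u) 0 ≤ ∫ u in Ioo a b, max (t - q₁ u) 0) ↔
      ∀ c ∈ Ioc a b, ∫ u in Ioo a c, q₁ u ≤ ∫ u in Ioo a c, q₂ u := by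
  constructor
  · intro h
    have hlt : ∀ c ∈ Ioo a b, ∫ u in Ioo a c, q₁ u ≤ ∫ u in Ioo a c, q₂ u := fun c hc => by
      have h₂ := sub_integral_le_integral_max_sub (t := q₁ c) hi₂ (Ioo_subset_Icc_self hc)
      have h₁ := integral_max_sub_eq_of_split hi₁ (Ioo_subset_Icc_self hc)
        (fun u hu => hm₁ ⟨hu.1, hu.2.trans hc.2⟩ hc hu.2.le)
        (fun u hu => hm₁ hc ⟨hc.1.trans hu.1, hu.2⟩ hu.1.le)
      linarith [h (q₁ c)]
    intro c hc
    rcases hc.2.lt_or_eq with hcb | rfl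
    · exact hlt c ⟨hc.1, hcb⟩
    · exact setIntegral_Ioo_le_of_forall_lt hab hi₁ hi₂ hlt
  · intro h t
    obtain ⟨c, hc, hlow, hhigh⟩ := hm₂.exists_split_Ioo hab.le t
    rw [integral_max_sub_eq_of_split hi₂ hc hlow hhigh]
    have hI : ∫ u in Ioo a c, q₁ u ≤ ∫ u in Ioo a c, q₂ u := by
      rcases hc.1.eq_or_lt with rfl | hac
      · simp
      · exact h c ⟨hac, hc.2⟩
    linarith [sub_integral_le_integral_max_sub (t := t) hi₁ hc]

end IntervalIntegrals

namespace MeasureTheory.Measure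

/-- The upper quantile function of a law on `ℝ`, so that `V@R_β(X) = -quantile (law X) β`.
Only its values on `(0, 1)` are meaningful. -/
noncomputable def quantile (μ : Measure ℝ) (u : ℝ) : ℝ :=
  sSup {s : ℝ | μ (Iio s) ≤ ENNReal.ofReal u}

variable {μ : Measure ℝ} [IsProbabilityMeasure μ] {u s : ℝ}

lemma nonempty_quantile_set (hu : 0 < u) : {s : ℝ | μ (Iio s) ≤ ENNReal.ofReal u}.Nonempty := by
  obtain ⟨s, hs⟩ := ((tendsto_cdf_atBot μ).eventually (gt_mem_nhds hu)).exists
  refine ⟨s, (measure_mono Iio_subset_Iic_self).trans ?_⟩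
  rw [← ofReal_cdf]
  exact ENNReal.ofReal_le_ofReal hs.le

lemma bddAbove_quantile_set (hu : u < 1) : BddAbove {s : ℝ | μ (Iio s) ≤ ENNReal.ofReal u} := by
  have h := (tendsto_measure_Iic_atTop μ).eventually
    (lt_mem_nhds (by rwa [measure_univ, ENNReal.ofReal_lt_one]))
  obtain ⟨s, hs⟩ := h.exists
  refine ⟨s, fun r hr => ?_⟩
  by_contra! hsr
  exact ((measure_mono (Iic_subset_Iio.2 hsr)).trans hr).not_gt hs

lemma quantile_monotoneOn : MonotoneOn μ.quantile (Ioo 0 1) := fun _ hu _ hv huv =>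
  csSup_le_csSup (bddAbove_quantile_set hv.2) (nonempty_quantile_set hu.1)
    fun _ hs => hs.trans (ENNReal.ofReal_le_ofReal huv)

lemma quantile_le_of_lt_cdf (hu : 0 < u) (h : u < cdf μ s) : μ.quantile u ≤ s := by
  refine csSup_le (nonempty_quantile_set hu) fun r hr => ?_
  by_contra! hsr
  have hle : μ (Iic s) ≤ ENNReal.ofReal u := (measure_mono (Iic_subset_Iio.2 hsr)).trans hr
  rw [← ofReal_cdf, ENNReal.ofReal_le_ofReal_iff hu.le] at hle
  exact hle.not_gt h

lemma le_cdf_of_quantile_le (hu : u < 1) (h : μ.quantile u ≤ s) : u ≤ cdf μ s := by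
  have hgt : ∀ r > s, u ≤ cdf μ r := fun r hr => by
    by_contra! hru
    have hmem : μ (Iio r) ≤ ENNReal.ofReal u := (measure_mono Iio_subset_Iic_self).trans
      (by rw [← ofReal_cdf]; exact ENNReal.ofReal_le_ofReal hru.le)
    exact (le_csSup (bddAbove_quantile_set hu) hmem).not_gt (h.trans_lt hr)
  exact ge_of_tendsto (((cdf μ).right_continuous s).mono Ioi_subset_Ici_self)
    (eventually_nhdsWithin_of_forall hgt)

lemma aemeasurable_quantile : AEMeasurable μ.quantile (volume.restrict (Ioo 0 1)) :=
  aemeasurable_restrict_of_monotoneOn measurableSet_Ioo quantile_monotoneOn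

theorem map_quantile : (volume.restrict (Ioo 0 1)).map μ.quantile = μ := by
  refine ext_of_Iic _ _ fun s => ?_
  rw [map_apply_of_aemeasurable aemeasurable_quantile measurableSet_Iic,
    restrict_apply' measurableSet_Ioo, ← ofReal_cdf]
  apply le_antisymm
  · calc volume (μ.quantile ⁻¹' Iic s ∩ Ioo 0 1) ≤ volume (Ioc 0 (cdf μ s)) :=
          measure_mono fun u hu => ⟨hu.2.1, le_cdf_of_quantile_le hu.2.2 hu.1⟩
      _ = ENNReal.ofReal (cdf μ s) := by simp
  · calc ENNReal.ofReal (cdf μ s) = volume (Ioo 0 (cdf μ s)) := by simp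
      _ ≤ volume (μ.quantile ⁻¹' Iic s ∩ Ioo 0 1) := measure_mono fun u hu =>
          ⟨quantile_le_of_lt_cdf hu.1 hu.2, hu.1, hu.2.trans_le (cdf_le_one μ s)⟩

lemma integral_eq_setIntegral_quantile {f : ℝ → ℝ} (hf : AEStronglyMeasurable f μ) :
    ∫ x, f x ∂μ = ∫ u in Ioo 0 1, f (μ.quantile u) := by
  conv_lhs => rw [← map_quantile (μ := μ)]
  rw [← map_quantile (μ := μ)] at hf
  exact integral_map aemeasurable_quantile hf

lemma integrableOn_quantile (h : Integrable id μ) : IntegrableOn μ.quantile (Ioo 0 1) := by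
  rw [← map_quantile (μ := μ)] at h
  exact (integrable_map_measure aestronglyMeasurable_id aemeasurable_quantile).1 h

end MeasureTheory.Measure

lemma setLIntegral_Iic_measure_Iic (μ : Measure ℝ) [SFinite μ] (t : ℝ) :
    ∫⁻ s in Iic t, μ (Iic s) = ∫⁻ x, ENNReal.ofReal (t - x) ∂μ := by
  have hE : MeasurableSet {p : ℝ × ℝ | p.1 ≤ p.2} := measurableSet_le measurable_fst measurable_snd
  calc ∫⁻ s in Iic t, μ (Iic s) = (μ.prod (volume.restrict (Iic t))) {p | p.1 ≤ p.2} :=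
        (Measure.prod_apply_symm hE).symm
    _ = ∫⁻ x, volume (Icc x t) ∂μ := by
        rw [Measure.prod_apply hE]
        refine lintegral_congr fun x => ?_
        rw [Measure.restrict_apply' measurableSet_Iic]
        rfl
    _ = ∫⁻ x, ENNReal.ofReal (t - x) ∂μ := by simp only [Real.volume_Icc]

lemma setIntegral_Iic_measure_Iic (μ : Measure ℝ) [IsFiniteMeasure μ] (t : ℝ) :
    ∫ s in Iic t, (μ (Iic s)).toReal = ∫ x, max (t - x) 0 ∂μ := by
  have hmono : Monotone fun s => (μ (Iic s)).toReal := fun _ _ h =>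
    ENNReal.toReal_mono (measure_ne_top _ _) (measure_mono (Iic_subset_Iic.2 h))
  rw [integral_eq_lintegral_of_nonneg_ae (Eventually.of_forall fun _ => ENNReal.toReal_nonneg)
      hmono.measurable.aestronglyMeasurable,
    integral_eq_lintegral_of_nonneg_ae (f := fun x => max (t - x) 0)
      (Eventually.of_forall fun _ => le_max_right _ _)
      (by fun_prop : Continuous fun x : ℝ => max (t - x) 0).aestronglyMeasurable]
  simp only [ENNReal.ofReal_toReal (measure_ne_top _ _), setLIntegral_Iic_measure_Iic,
    ENNReal.ofReal_max, ENNReal.ofReal_zero, zero_le, sup_of_le_left]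

section RandomVariables

variable {P : Measure Ω} {X : Ω → ℝ}

lemma realVaR_eq_neg_quantile (hX : AEMeasurable X P) (β : ℝ) :
    realVaR P β X = -(P.map X).quantile β := by
  rw [realVaR, Measure.quantile, Real.sInf_def]
  congr 2
  ext s
  simp only [Set.mem_neg, mem_ofPred_eq, Measure.map_apply_of_aemeasurable hX measurableSet_Iio,
    add_neg_lt_iff_lt_add, zero_add]
  rfl

lemma AVaR_eq_neg_integral_quantile (hX : AEMeasurable X P) (α : ℝ) :
    AVaR P α X = -(1 / α * ∫ u in Ioo 0 α, (P.map X).quantile u) := by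
  simp only [AVaR, realVaR_eq_neg_quantile hX, integral_neg, mul_neg]

lemma setIntegral_Iic_measure_le_eq_integral_quantile [IsProbabilityMeasure P]
    (hX : AEMeasurable X P) (t : ℝ) :
    ∫ s in Iic t, (P {ω | X ω ≤ s}).toReal =
      ∫ u in Ioo 0 1, max (t - (P.map X).quantile u) 0 := by
  have : IsProbabilityMeasure (P.map X) := Measure.isProbabilityMeasure_map hX
  calc ∫ s in Iic t, (P {ω | X ω ≤ s}).toReal = ∫ s in Iic t, ((P.map X) (Iic s)).toReal := by
        simp_rw [Measure.map_apply_of_aemeasurable hX measurableSet_Iic]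
        rfl
    _ = ∫ x, max (t - x) 0 ∂(P.map X) := setIntegral_Iic_measure_Iic _ t
    _ = ∫ u in Ioo 0 1, max (t - (P.map X).quantile u) 0 :=
        Measure.integral_eq_setIntegral_quantile
          (by fun_prop : Continuous fun x : ℝ => max (t - x) 0).aestronglyMeasurable

lemma integrableOn_quantile_map [IsProbabilityMeasure P] (hX : Integrable X P) :
    IntegrableOn (P.map X).quantile (Ioo 0 1) := by
  have : IsProbabilityMeasure (P.map X) := Measure.isProbabilityMeasure_map hX.aemeasurable
  exact Measure.integrableOn_quantile
    ((integrable_map_measure aestronglyMeasurable_id hX.aemeasurable).2 hX)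

end RandomVariables

/-- Second-order stochastic dominance is characterized by the Average-Value-at-Risk:
for integrable `X, Y`, `Y ⪯_SSD X` (i.e. `∫_{-∞}^t F_Y(s) ds ≥ ∫_{-∞}^t F_X(s) ds`
for all `t`) if and only if `AV@R_α(Y) ≥ AV@R_α(X)` for all `α ∈ (0,1]`. -/
theorem ssd_iff_avaR (P : Measure Ω) [IsProbabilityMeasure P]
    (X Y : Ω → ℝ) (hX : Integrable X P) (hY : Integrable Y P) :
    (∀ t : ℝ, (∫ s in Iic t, (P {ω | X ω ≤ s}).toReal) ≥
        ∫ s in Iic t, (P {ω | Y ω ≤ s}).toReal) ↔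
      (∀ α : ℝ, 0 < α → α ≤ 1 → AVaR P α X ≥ AVaR P α Y) := by
  have := Measure.isProbabilityMeasure_map hX.aemeasurable
  have := Measure.isProbabilityMeasure_map hY.aemeasurable
  simp only [ge_iff_le, setIntegral_Iic_measure_le_eq_integral_quantile hX.aemeasurable,
    setIntegral_Iic_measure_le_eq_integral_quantile hY.aemeasurable,
    AVaR_eq_neg_integral_quantile hX.aemeasurable, AVaR_eq_neg_integral_quantile hY.aemeasurable]
  rw [forall_integral_max_sub_le_iff zero_lt_one Measure.quantile_monotoneOn
    Measure.quantile_monotoneOn (integrableOn_quantile_map hX) (integrableOn_quantile_map hY)]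
  have hscale : ∀ {α A B : ℝ}, 0 < α → (-(1 / α * B) ≤ -(1 / α * A) ↔ A ≤ B) := fun hα => by
    rw [neg_le_neg_iff, mul_le_mul_iff_right₀ (one_div_pos.2 hα)]
  exact forall_congr' fun α =>
    ⟨fun h hα hα1 => (hscale hα).2 (h ⟨hα, hα1⟩), fun h hα => (hscale hα.1).1 (h hα.1 hα.2)⟩
end
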